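/- Fix Φ∈(0,∞)^V, n∈ℕ^E, and an edge {x,y}∈E with n_{xy}≥1, and suppose x lies in the connected component of x₀ in C(n)=(V,{e: n_e>0}). Let n−δ_{xy} be n with the value at edge {x,y} decreased by 1, and define the disjoint events: A₁ = {the number of connected components of C(n−δ_{xy}) equals that of C(n)}; A₂ = {C(n−δ_{xy}) has one more connected component than C(n), and y lies in the connected component of x₀ in C(n−δ_{xy})}; A₃ = {C(n−δ_{xy}) has one more connected component than C(n), and x lies in the connected component of x₀ in C(n−δ_{xy})}. Then: Θ(y,Φ,n−δ_{xy}) = (1_{A₁}+2·1_{A₂})·(n_{xy}/(2W_{xy}))·(1/Φ_x²)·Θ(x,Φ,n), and Θ(x,Φ,n−δ_{xy}) = (1_{A₁}+2·1_{A₃})·(n_{xy}/(2W_{xy}Φ_xΦ_y))·Θ(x,Φ,n). Moreover under the standing assumption that x is in the component of x₀ in C(n), exactly one of A₁, A₂, A₃ occurs, i.e. 1 = 1_{A₁}+1_{A₂}+1_{A₃}. -/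

import Mathlib

open scoped Classical
noncomputable section

/-- The simple graph on `V` whose edges are the edges `e` of the multigraph
(with endpoint map `ends`) satisfying `p e`. -/
def og {V E : Type} (ends : E → V × V) (p : E → Prop) : SimpleGraph V :=
  SimpleGraph.fromRel (fun v w => ∃ e, p e ∧ (ends e).1 = v ∧ (ends e).2 = w)

/-- Number of connected components (isolated vertices counted) of the subgraph
with edge set `{e | p e}`. -/
def numC {V E : Type} (ends : E → V × V) (p : E → Prop) : ℕ :=
  Nat.card (og ends p).ConnectedComponent

variable {V E : Type} [Fintype V] [Fintype E]

/-- Interaction constant `J_e(Φ) = W_e Φ_{e₊} Φ_{e₋}`. -/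
def Jw (ends : E → V × V) (W : E → ℝ) (Φ : V → ℝ) (e : E) : ℝ :=
  W e * Φ (ends e).1 * Φ (ends e).2

/-- The set of edges incident to the vertex `x`. -/
def inc (ends : E → V × V) (x : V) : Finset E :=
  Finset.univ.filter (fun e => (ends e).1 = x ∨ (ends e).2 = x)

/-- The endpoint of the edge `e` other than `x`. -/
def oth (ends : E → V × V) (e : E) (x : V) : V :=
  if (ends e).1 = x then (ends e).2 else (ends e).1

/-- Total conductance at `x`: `W_x = ∑_{y ~ x} W_{xy}` (sum over edges incident to `x`). -/
def Wtot (ends : E → V × V) (W : E → ℝ) (x : V) : ℝ :=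
  ∑ e ∈ inc ends x, W e

/-- The function `Θ(x, Φ, n)` of the paper. -/
def Theta (ends : E → V × V) (W : E → ℝ) (x₀ x : V) (Φ : V → ℝ) (n : E → ℕ) : ℝ :=
  Real.exp (-(1 / 2) * ∑ z, Wtot ends W z * Φ z ^ 2 - ∑ e, Jw ends W Φ e) *
  (∏ e, (2 * Jw ends W Φ e) ^ n e / ((n e).factorial : ℝ)) *
  2 ^ (numC ends (fun e => 0 < n e) - 1) *
  (∏ z ∈ Finset.univ.erase x, Φ z)⁻¹ *
  (if (og ends (fun e => 0 < n e)).Reachable x x₀ then 1 else 0)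

private lemma reach_decomp' {G G' : SimpleGraph V} {x y : V}
    (hcov : ∀ u v, G.Adj u v → G'.Adj u v ∨ (u = x ∧ v = y) ∨ (u = y ∧ v = x))
    {u v : V} (h : G.Reachable u v) :
    G'.Reachable u v ∨ (G'.Reachable u x ∧ G'.Reachable y v) ∨
      (G'.Reachable u y ∧ G'.Reachable x v) := by
  obtain ⟨w⟩ := h
  induction w with
  | nil => exact Or.inl (SimpleGraph.Reachable.refl _)
  | cons h w ih =>
    rcases hcov _ _ h with h' | ⟨rfl, rfl⟩ | ⟨rfl, rfl⟩
    · have hub := h'.reachable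
      rcases ih with h1 | ⟨h1, h2⟩ | ⟨h1, h2⟩
      · exact Or.inl (hub.trans h1)
      · exact Or.inr (Or.inl ⟨hub.trans h1, h2⟩)
      · exact Or.inr (Or.inr ⟨hub.trans h1, h2⟩)
    · rcases ih with h1 | ⟨h1, h2⟩ | ⟨h1, h2⟩
      · exact Or.inr (Or.inl ⟨SimpleGraph.Reachable.refl _, h1⟩)
      · exact Or.inr (Or.inl ⟨SimpleGraph.Reachable.refl _, h2⟩)
      · exact Or.inl h2
    · rcases ih with h1 | ⟨h1, h2⟩ | ⟨h1, h2⟩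
      · exact Or.inr (Or.inr ⟨SimpleGraph.Reachable.refl _, h1⟩)
      · exact Or.inl h2
      · exact Or.inr (Or.inr ⟨SimpleGraph.Reachable.refl _, h2⟩)

private lemma reach_iff' {G G' : SimpleGraph V} {x y : V} (hsub : G' ≤ G)
    (hcov : ∀ u v, G.Adj u v → G'.Adj u v ∨ (u = x ∧ v = y) ∨ (u = y ∧ v = x))
    (hxy : G'.Reachable x y) {u v : V} :
    G.Reachable u v ↔ G'.Reachable u v := by
  constructor
  · intro h
    rcases reach_decomp' hcov h with h1 | ⟨h1, h2⟩ | ⟨h1, h2⟩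
    · exact h1
    · exact (h1.trans hxy).trans h2
    · exact (h1.trans hxy.symm).trans h2
  · exact fun h => h.mono hsub

private lemma card_eq_of_reach' {G G' : SimpleGraph V} {x y : V} (hsub : G' ≤ G)
    (hcov : ∀ u v, G.Adj u v → G'.Adj u v ∨ (u = x ∧ v = y) ∨ (u = y ∧ v = x))
    (hxy : G'.Reachable x y) :
    Nat.card G'.ConnectedComponent = Nat.card G.ConnectedComponent := by
  apply Nat.card_eq_of_bijective
    (SimpleGraph.ConnectedComponent.map (SimpleGraph.Hom.ofLE hsub))
  constructor
  · refine SimpleGraph.ConnectedComponent.ind₂ (fun u v h => ?_)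
    simp only [SimpleGraph.ConnectedComponent.map_mk, SimpleGraph.Hom.ofLE_apply,
      SimpleGraph.ConnectedComponent.eq] at h ⊢
    exact (reach_iff' hsub hcov hxy).mp h
  · refine SimpleGraph.ConnectedComponent.ind (fun v => ?_)
    exact ⟨G'.connectedComponentMk v, rfl⟩

private lemma card_succ' {G G' : SimpleGraph V} {x y : V} (hsub : G' ≤ G)
    (hcov : ∀ u v, G.Adj u v → G'.Adj u v ∨ (u = x ∧ v = y) ∨ (u = y ∧ v = x))
    (hadj : G.Adj x y) (hnxy : ¬ G'.Reachable x y) :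
    Nat.card G'.ConnectedComponent = Nat.card G.ConnectedComponent + 1 := by
  set φ := SimpleGraph.Hom.ofLE hsub with hφ
  set a := G'.connectedComponentMk y with ha
  have hmap : ∀ c d : G'.ConnectedComponent,
      c.map φ = d.map φ → c = d ∨ (c = G'.connectedComponentMk x ∧ d = a)
        ∨ (c = a ∧ d = G'.connectedComponentMk x) := by
    refine SimpleGraph.ConnectedComponent.ind₂ (fun u v h => ?_)
    simp only [SimpleGraph.ConnectedComponent.map_mk, SimpleGraph.Hom.ofLE_apply,
      SimpleGraph.ConnectedComponent.eq] at h
    rcases reach_decomp' hcov h with h1 | ⟨h1, h2⟩ | ⟨h1, h2⟩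
    · exact Or.inl (SimpleGraph.ConnectedComponent.sound h1)
    · exact Or.inr (Or.inl ⟨SimpleGraph.ConnectedComponent.sound h1,
        SimpleGraph.ConnectedComponent.sound h2.symm⟩)
    · exact Or.inr (Or.inr ⟨SimpleGraph.ConnectedComponent.sound h1,
        SimpleGraph.ConnectedComponent.sound h2.symm⟩)
  have hxa : G'.connectedComponentMk x ≠ a := by
    simpa [ha, SimpleGraph.ConnectedComponent.eq] using hnxy
  have hbij : Function.Bijective (fun c : {c : G'.ConnectedComponent // c ≠ a} => c.1.map φ) := by
    constructor
    · rintro ⟨c, hc⟩ ⟨d, hd⟩ hcd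
      simp only at hcd
      rcases hmap c d hcd with h | ⟨h1, h2⟩ | ⟨h1, h2⟩
      · exact Subtype.ext h
      · exact absurd h2 hd
      · exact absurd h1 hc
    · refine SimpleGraph.ConnectedComponent.ind (fun v => ?_)
      by_cases hv : G'.Reachable v y
      · refine ⟨⟨G'.connectedComponentMk x, hxa⟩, ?_⟩
        simp only [SimpleGraph.ConnectedComponent.map_mk,
          SimpleGraph.Hom.ofLE_apply, SimpleGraph.ConnectedComponent.eq]
        exact hadj.reachable.trans ((hv.mono hsub).symm)
      · refine ⟨⟨G'.connectedComponentMk v, ?_⟩, rfl⟩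
        simpa [ha, SimpleGraph.ConnectedComponent.eq] using hv
  have h1 : Nat.card {c : G'.ConnectedComponent // c ≠ a} = Nat.card G.ConnectedComponent :=
    Nat.card_eq_of_bijective _ hbij
  haveI : Fintype G'.ConnectedComponent := Fintype.ofFinite _
  have h2 : Nat.card {c : G'.ConnectedComponent // c ≠ a} =
      Nat.card G'.ConnectedComponent - 1 := by
    rw [Nat.card_eq_fintype_card, Nat.card_eq_fintype_card]
    have := Fintype.card_subtype_compl (fun c : G'.ConnectedComponent => c = a)
    simp only [Fintype.card_subtype_eq] at this
    convert this using 2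
  haveI : Nonempty G'.ConnectedComponent := ⟨a⟩
  have h3 : 1 ≤ Nat.card G'.ConnectedComponent := Nat.card_pos
  omega

private lemma prod_factor' (f : E → ℝ) (e₀ : E) (hf : f e₀ ≠ 0) (n : E → ℕ) (hn : 1 ≤ n e₀) :
    (∏ e, (f e) ^ (Function.update n e₀ (n e₀ - 1) e) /
      ((Function.update n e₀ (n e₀ - 1) e).factorial : ℝ))
    = (n e₀ : ℝ) / f e₀ * ∏ e, (f e) ^ n e / ((n e).factorial : ℝ) := by
  rw [← Finset.mul_prod_erase Finset.univ _ (Finset.mem_univ e₀),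
      ← Finset.mul_prod_erase Finset.univ (fun e => (f e) ^ n e / ((n e).factorial : ℝ))
        (Finset.mem_univ e₀)]
  have hrest : ∏ e ∈ Finset.univ.erase e₀,
      (f e) ^ (Function.update n e₀ (n e₀ - 1) e) /
        ((Function.update n e₀ (n e₀ - 1) e).factorial : ℝ)
      = ∏ e ∈ Finset.univ.erase e₀, (f e) ^ n e / ((n e).factorial : ℝ) := by
    refine Finset.prod_congr rfl (fun e he => ?_)
    rw [Function.update_of_ne (Finset.ne_of_mem_erase he)]
  rw [hrest, Function.update_self]
  have key : ∀ k : ℕ, 1 ≤ k →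
      f e₀ ^ (k - 1) / ((k - 1).factorial : ℝ)
        = (k : ℝ) / f e₀ * (f e₀ ^ k / (k.factorial : ℝ)) := by
    intro k hk
    obtain ⟨m, rfl⟩ := Nat.exists_eq_add_of_le hk
    simp only [Nat.add_sub_cancel_left, add_tsub_cancel_left]
    have h1 : ((1 + m).factorial : ℝ) = (1 + m : ℕ) * (m.factorial : ℝ) := by
      rw [add_comm 1 m, Nat.factorial_succ]; push_cast; ring
    have hm : (m.factorial : ℝ) ≠ 0 := Nat.cast_ne_zero.mpr m.factorial_ne_zero
    have hk' : ((1 + m : ℕ) : ℝ) ≠ 0 := by positivity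
    rw [h1, pow_add]
    field_simp
  rw [key (n e₀) hn]
  ring

private lemma erase_inv' (Φ : V → ℝ) (hΦ : ∀ z, Φ z ≠ 0) {x y : V} (hxy : x ≠ y) :
    (∏ z ∈ Finset.univ.erase y, Φ z)⁻¹ = Φ y / Φ x * (∏ z ∈ Finset.univ.erase x, Φ z)⁻¹ := by
  have h1 : Φ y * ∏ z ∈ Finset.univ.erase y, Φ z = Φ x * ∏ z ∈ Finset.univ.erase x, Φ z := by
    rw [Finset.mul_prod_erase Finset.univ Φ (Finset.mem_univ y),
        Finset.mul_prod_erase Finset.univ Φ (Finset.mem_univ x)]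
  have h3 : (∏ z ∈ Finset.univ.erase x, Φ z) ≠ 0 :=
    Finset.prod_ne_zero_iff.mpr (fun z _ => hΦ z)
  have hA : (∏ z ∈ Finset.univ.erase y, Φ z) =
      Φ x * (∏ z ∈ Finset.univ.erase x, Φ z) / Φ y := by
    rw [eq_div_iff (hΦ y)]
    linear_combination h1
  rw [hA, inv_div, ← div_div, div_eq_mul_inv (Φ y / Φ x)]

/-- effect on `Θ` of decreasing a current stack by one, according to
whether the edge closure preserves the clusters (`A₁`) or creates a new cluster
containing `y` resp. `x` on the side of `x₀` (`A₂`, `A₃`). -/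
theorem stmt10 [Nonempty V] (ends : E → V × V)
    (hloop : ∀ e, (ends e).1 ≠ (ends e).2)
    (hconn : (og ends (fun _ => True)).Connected)
    (W : E → ℝ) (hW : ∀ e, 0 < W e) (x₀ : V)
    (e₀ : E) (x y : V) (hxy : ends e₀ = (x, y))
    (Φ : V → ℝ) (hΦ : ∀ z, 0 < Φ z) (n : E → ℕ) (hn : 1 ≤ n e₀)
    (hx : (og ends (fun e => 0 < n e)).Reachable x x₀) :
    (Theta ends W x₀ y Φ (Function.update n e₀ (n e₀ - 1)) =
      ((if numC ends (fun e => 0 < Function.update n e₀ (n e₀ - 1) e)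
            = numC ends (fun e => 0 < n e) then (1 : ℝ) else 0)
        + 2 * (if numC ends (fun e => 0 < Function.update n e₀ (n e₀ - 1) e)
            = numC ends (fun e => 0 < n e) + 1 ∧
            (og ends (fun e => 0 < Function.update n e₀ (n e₀ - 1) e)).Reachable y x₀
            then (1 : ℝ) else 0)) *
      ((n e₀ : ℝ) / (2 * W e₀)) * (1 / Φ x ^ 2) * Theta ends W x₀ x Φ n)
    ∧
    (Theta ends W x₀ x Φ (Function.update n e₀ (n e₀ - 1)) =
      ((if numC ends (fun e => 0 < Function.update n e₀ (n e₀ - 1) e)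
            = numC ends (fun e => 0 < n e) then (1 : ℝ) else 0)
        + 2 * (if numC ends (fun e => 0 < Function.update n e₀ (n e₀ - 1) e)
            = numC ends (fun e => 0 < n e) + 1 ∧
            (og ends (fun e => 0 < Function.update n e₀ (n e₀ - 1) e)).Reachable x x₀
            then (1 : ℝ) else 0)) *
      ((n e₀ : ℝ) / (2 * W e₀ * Φ x * Φ y)) * Theta ends W x₀ x Φ n)
    ∧
    ((1 : ℝ) =
      (if numC ends (fun e => 0 < Function.update n e₀ (n e₀ - 1) e)
          = numC ends (fun e => 0 < n e) then (1 : ℝ) else 0)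
      + (if numC ends (fun e => 0 < Function.update n e₀ (n e₀ - 1) e)
          = numC ends (fun e => 0 < n e) + 1 ∧
          (og ends (fun e => 0 < Function.update n e₀ (n e₀ - 1) e)).Reachable y x₀
          then (1 : ℝ) else 0)
      + (if numC ends (fun e => 0 < Function.update n e₀ (n e₀ - 1) e)
          = numC ends (fun e => 0 < n e) + 1 ∧
          (og ends (fun e => 0 < Function.update n e₀ (n e₀ - 1) e)).Reachable x x₀
          then (1 : ℝ) else 0)) := by
  set n' : E → ℕ := Function.update n e₀ (n e₀ - 1) with hn'def
  have hxyne : x ≠ y := by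
    have := hloop e₀; rw [hxy] at this; exact this
  have hple : ∀ e, (0 < n' e) → 0 < n e := by
    intro e h
    by_cases he : e = e₀
    · subst he; rw [hn'def, Function.update_self] at h; omega
    · rwa [hn'def, Function.update_of_ne he] at h
  have hsub : og ends (fun e => 0 < n' e) ≤ og ends (fun e => 0 < n e) := by
    intro u v h
    rw [og, SimpleGraph.fromRel_adj] at h ⊢
    obtain ⟨hne, h⟩ := h
    refine ⟨hne, ?_⟩
    rcases h with ⟨e, he, h1, h2⟩ | ⟨e, he, h1, h2⟩
    · exact Or.inl ⟨e, hple e he, h1, h2⟩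
    · exact Or.inr ⟨e, hple e he, h1, h2⟩
  have hcov : ∀ u v, (og ends (fun e => 0 < n e)).Adj u v →
      (og ends (fun e => 0 < n' e)).Adj u v ∨ (u = x ∧ v = y) ∨ (u = y ∧ v = x) := by
    intro u v h
    rw [og, SimpleGraph.fromRel_adj] at h
    obtain ⟨hne, h⟩ := h
    rcases h with ⟨e, he, h1, h2⟩ | ⟨e, he, h1, h2⟩
    · by_cases heq : e = e₀
      · subst heq; rw [hxy] at h1 h2
        exact Or.inr (Or.inl ⟨h1.symm, h2.symm⟩)
      · refine Or.inl ?_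
        rw [og, SimpleGraph.fromRel_adj]
        refine ⟨hne, Or.inl ⟨e, ?_, h1, h2⟩⟩
        rwa [hn'def, Function.update_of_ne heq]
    · by_cases heq : e = e₀
      · subst heq; rw [hxy] at h1 h2
        exact Or.inr (Or.inr ⟨h2.symm, h1.symm⟩)
      · refine Or.inl ?_
        rw [og, SimpleGraph.fromRel_adj]
        refine ⟨hne, Or.inr ⟨e, ?_, h1, h2⟩⟩
        rwa [hn'def, Function.update_of_ne heq]
  have hadj : (og ends (fun e => 0 < n e)).Adj x y := by
    rw [og, SimpleGraph.fromRel_adj]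
    exact ⟨hxyne, Or.inl ⟨e₀, hn, by rw [hxy], by rw [hxy]⟩⟩
  -- positivity facts
  have hΦx : Φ x ≠ 0 := ne_of_gt (hΦ x)
  have hΦy : Φ y ≠ 0 := ne_of_gt (hΦ y)
  have hW0 : W e₀ ≠ 0 := ne_of_gt (hW e₀)
  have hJ : Jw ends W Φ e₀ = W e₀ * Φ x * Φ y := by rw [Jw, hxy]
  have hf : (2 : ℝ) * Jw ends W Φ e₀ ≠ 0 := by
    rw [hJ]; positivity
  have hprod : (∏ e, (2 * Jw ends W Φ e) ^ (Function.update n e₀ (n e₀ - 1) e) /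
      ((Function.update n e₀ (n e₀ - 1) e).factorial : ℝ))
      = (n e₀ : ℝ) / (2 * (W e₀ * Φ x * Φ y)) *
        ∏ e, (2 * Jw ends W Φ e) ^ n e / ((n e).factorial : ℝ) := by
    have h := prod_factor' (fun e => 2 * Jw ends W Φ e) e₀ hf n hn
    simpa only [hJ] using h
  have herase := erase_inv' Φ (fun z => ne_of_gt (hΦ z)) hxyne
  haveI : Nonempty (og ends (fun e => 0 < n e)).ConnectedComponent :=
    ⟨(og ends (fun e => 0 < n e)).connectedComponentMk x⟩
  have hc1 : 1 ≤ numC ends (fun e => 0 < n e) := Nat.card_pos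
  rcases em ((og ends (fun e => 0 < n' e)).Reachable x y) with hr | hr
  · -- case A₁
    have hceq : numC ends (fun e => 0 < n' e) = numC ends (fun e => 0 < n e) :=
      card_eq_of_reach' hsub hcov hr
    have hxx₀' : (og ends (fun e => 0 < n' e)).Reachable x x₀ :=
      (reach_iff' hsub hcov hr).mp hx
    have hyx₀' : (og ends (fun e => 0 < n' e)).Reachable y x₀ := hr.symm.trans hxx₀'
    have hne2 : ¬(numC ends (fun e => 0 < n' e) = numC ends (fun e => 0 < n e) + 1 ∧
        (og ends (fun e => 0 < n' e)).Reachable y x₀) := by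
      rintro ⟨h, -⟩; omega
    have hne3 : ¬(numC ends (fun e => 0 < n' e) = numC ends (fun e => 0 < n e) + 1 ∧
        (og ends (fun e => 0 < n' e)).Reachable x x₀) := by
      rintro ⟨h, -⟩; omega
    refine ⟨?_, ?_, ?_⟩
    · rw [if_pos hceq, if_neg hne2, Theta, Theta, if_pos hyx₀', if_pos hx, hprod, hceq, herase]
      set Ex := Real.exp (-(1 / 2) * ∑ z, Wtot ends W z * Φ z ^ 2 - ∑ e, Jw ends W Φ e) with hEx
      set P := ∏ e, (2 * Jw ends W Φ e) ^ n e / ((n e).factorial : ℝ) with hP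
      set B := (∏ z ∈ Finset.univ.erase x, Φ z)⁻¹ with hB
      set c2 : ℝ := 2 ^ (numC ends (fun e => 0 < n e) - 1) with hc2
      field_simp
      ring
    · rw [if_pos hceq, if_neg hne3, Theta, Theta, if_pos hxx₀', if_pos hx, hprod, hceq]
      set Ex := Real.exp (-(1 / 2) * ∑ z, Wtot ends W z * Φ z ^ 2 - ∑ e, Jw ends W Φ e) with hEx
      set P := ∏ e, (2 * Jw ends W Φ e) ^ n e / ((n e).factorial : ℝ) with hP
      set B := (∏ z ∈ Finset.univ.erase x, Φ z)⁻¹ with hB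
      set c2 : ℝ := 2 ^ (numC ends (fun e => 0 < n e) - 1) with hc2
      field_simp
      ring
    · rw [if_pos hceq, if_neg hne2, if_neg hne3]; norm_num
  · -- numC increases
    have hceq : numC ends (fun e => 0 < n' e) = numC ends (fun e => 0 < n e) + 1 :=
      card_succ' hsub hcov hadj hr
    have hne1 : ¬(numC ends (fun e => 0 < n' e) = numC ends (fun e => 0 < n e)) := by omega
    have hpow : (2 : ℝ) ^ (numC ends (fun e => 0 < n e) + 1 - 1)
        = 2 * 2 ^ (numC ends (fun e => 0 < n e) - 1) := by
      rw [Nat.add_sub_cancel]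
      conv_lhs => rw [show numC ends (fun e => 0 < n e)
        = (numC ends (fun e => 0 < n e) - 1) + 1 from (Nat.succ_pred_eq_of_pos hc1).symm]
      rw [pow_succ]; ring
    rcases reach_decomp' hcov hx with h1 | ⟨h1, h2⟩ | ⟨h1, h2⟩
    · -- A₃ : x side
      have hny : ¬ (og ends (fun e => 0 < n' e)).Reachable y x₀ := fun h => hr (h1.trans h.symm)
      have hne2 : ¬(numC ends (fun e => 0 < n' e) = numC ends (fun e => 0 < n e) + 1 ∧
          (og ends (fun e => 0 < n' e)).Reachable y x₀) := by rintro ⟨-, h⟩; exact hny h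
      refine ⟨?_, ?_, ?_⟩
      · rw [if_neg hne1, if_neg hne2, Theta, if_neg hny]
        simp
      · rw [if_neg hne1, if_pos ⟨hceq, h1⟩, Theta, Theta, if_pos h1, if_pos hx, hprod, hceq,
          hpow]
        set Ex := Real.exp (-(1 / 2) * ∑ z, Wtot ends W z * Φ z ^ 2 - ∑ e, Jw ends W Φ e) with hEx
        set P := ∏ e, (2 * Jw ends W Φ e) ^ n e / ((n e).factorial : ℝ) with hP
        set B := (∏ z ∈ Finset.univ.erase x, Φ z)⁻¹ with hB
        set c2 : ℝ := 2 ^ (numC ends (fun e => 0 < n e) - 1) with hc2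
        field_simp
        ring
      · rw [if_neg hne1, if_neg hne2, if_pos ⟨hceq, h1⟩]; norm_num
    · -- A₂ : y side
      have hnx : ¬ (og ends (fun e => 0 < n' e)).Reachable x x₀ := fun h => hr (h.trans h2.symm)
      have hne3 : ¬(numC ends (fun e => 0 < n' e) = numC ends (fun e => 0 < n e) + 1 ∧
          (og ends (fun e => 0 < n' e)).Reachable x x₀) := by rintro ⟨-, h⟩; exact hnx h
      refine ⟨?_, ?_, ?_⟩
      · rw [if_neg hne1, if_pos ⟨hceq, h2⟩, Theta, Theta, if_pos h2, if_pos hx, hprod, hceq,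
          hpow, herase]
        set Ex := Real.exp (-(1 / 2) * ∑ z, Wtot ends W z * Φ z ^ 2 - ∑ e, Jw ends W Φ e) with hEx
        set P := ∏ e, (2 * Jw ends W Φ e) ^ n e / ((n e).factorial : ℝ) with hP
        set B := (∏ z ∈ Finset.univ.erase x, Φ z)⁻¹ with hB
        set c2 : ℝ := 2 ^ (numC ends (fun e => 0 < n e) - 1) with hc2
        field_simp
        ring
      · rw [if_neg hne1, if_neg hne3, Theta, if_neg hnx]
        simp
      · rw [if_neg hne1, if_pos ⟨hceq, h2⟩, if_neg hne3]; norm_num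
    · exact absurd h1 hr
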